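/- Uniformity of the homogenized distribution: suppose for each x in a finite set 𝕏, ratios satisfy |n·p_x/C_x - 1| ≤ α with 0 < α ≤ 1/2, p_x > 0, C_x > 0, and define r_x = (p_x/C_x)/Σ_z (p_z/C_z). Then |r_x - 1/|𝕏|| ≤ 4α/|𝕏| for every x. -/

import Mathlib

/-!
Normalization is invariant under scaling, so `r` is the normalization of the weights
`w z = n p z / C z`, each within `α` of `1`. With `N = |𝕏|` and `S = ∑ w`, one has
`w x / S - 1 / N = (N (w x - 1) - (S - N)) / (N S)`; the numerator is at most `2 N α` in absolute
value, and `S ≥ N (1 - α) ≥ N / 2` because `α ≤ 1 / 2`.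
-/

open Finset

theorem abs_sum_sub_card_le {ι : Type*} [Fintype ι] (w : ι → ℝ) (α : ℝ)
    (hw : ∀ z, |w z - 1| ≤ α) :
    |∑ z, w z - Fintype.card ι| ≤ Fintype.card ι * α := by
  calc |∑ z, w z - Fintype.card ι| = |∑ z, (w z - 1)| := by simp [sum_sub_distrib]
    _ ≤ ∑ z, |w z - 1| := abs_sum_le_sum_abs _ _
    _ ≤ ∑ _z : ι, α := sum_le_sum fun z _ => hw z
    _ = Fintype.card ι * α := by simp

theorem abs_div_sum_sub_inv_card_le {ι : Type*} [Fintype ι] (w : ι → ℝ) (α : ℝ)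
    (hα : α ≤ 1 / 2) (hw : ∀ z, |w z - 1| ≤ α) (x : ι) :
    |w x / ∑ z, w z - 1 / Fintype.card ι| ≤ 4 * α / Fintype.card ι := by
  have : Nonempty ι := ⟨x⟩
  set N : ℝ := (Fintype.card ι : ℝ)
  set S := ∑ z, w z
  have hN : 0 < N := by positivity
  have hα0 : 0 ≤ α := (abs_nonneg _).trans (hw x)
  have hSN : |S - N| ≤ N * α := abs_sum_sub_card_le w α hw
  have hS : N / 2 ≤ S := by nlinarith [(abs_le.mp hSN).1]
  have hS0 : 0 < S := by linarith
  have hNS : 0 < N * S := mul_pos hN hS0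
  have hnum : |N * (w x - 1) - (S - N)| ≤ 2 * N * α := by
    calc |N * (w x - 1) - (S - N)| ≤ |N * (w x - 1)| + |S - N| := abs_sub _ _
      _ ≤ N * α + N * α := by
          rw [abs_mul, abs_of_pos hN]
          gcongr
          exact hw x
      _ = 2 * N * α := by ring
  have hdiff : w x / S - 1 / N = (N * (w x - 1) - (S - N)) / (N * S) := by
    rw [eq_div_iff hNS.ne']
    field_simp
    ring
  rw [hdiff, abs_div, abs_of_pos hNS, div_le_div_iff₀ hNS hN]
  nlinarith [mul_le_mul_of_nonneg_left hS (by positivity : 0 ≤ 4 * α * N)]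

theorem homogenized_uniformity_general {𝕏 : Type*} [Fintype 𝕏]
    (n α : ℝ) (hn : 0 < n) (hα1 : α ≤ 1 / 2)
    (p C : 𝕏 → ℝ)
    (hclose : ∀ x, |n * p x / C x - 1| ≤ α)
    (r : 𝕏 → ℝ) (hr : ∀ x, r x = (p x / C x) / ∑ z, p z / C z) (x : 𝕏) :
    |r x - 1 / (Fintype.card 𝕏 : ℝ)| ≤ 4 * α / (Fintype.card 𝕏 : ℝ) := by
  have hrx : r x = n * p x / C x / ∑ z, n * p z / C z := by
    simp only [hr, mul_div_assoc, ← mul_sum, mul_div_mul_left _ _ hn.ne']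
  rw [hrx]
  exact abs_div_sum_sub_inv_card_le _ α hα1 hclose x

theorem homogenized_uniformity {𝕏 : Type*} [Fintype 𝕏] [Nonempty 𝕏]
    (n α : ℝ) (hn : 0 < n) (hα0 : 0 < α) (hα1 : α ≤ 1 / 2)
    (p C : 𝕏 → ℝ) (hp : ∀ x, 0 < p x) (hC : ∀ x, 0 < C x)
    (hclose : ∀ x, |n * p x / C x - 1| ≤ α)
    (r : 𝕏 → ℝ) (hr : ∀ x, r x = (p x / C x) / ∑ z, p z / C z) (x : 𝕏) :
    |r x - 1 / (Fintype.card 𝕏 : ℝ)| ≤ 4 * α / (Fintype.card 𝕏 : ℝ) :=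
  homogenized_uniformity_general n α hn hα1 p C hclose r hr x
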